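/- arXiv:2507.15726 — 6 statements merged into one kernel-verified Lean document; each statement's English description precedes it below -/
import Mathlib

section
/- The evaluation map q ↦ q(1) induces a group isomorphism Quad(ℤ/nℤ, M) ≅ M[gcd(2n, n²)], where M[d] = {m ∈ M : d·m = 0} is the d-torsion subgroup. -/
/-- A function of two variables is biadditive if it is additive in each argument. -/
def IsBiadd {A B M : Type*} [AddCommGroup A] [AddCommGroup B] [AddCommGroup M]
    (f : A → B → M) : Prop :=
  (∀ a a' b, f (a + a') b = f a b + f a' b) ∧
  (∀ a b b', f a (b + b') = f a b + f a b')

/-- A quadratic form: even, with biadditive polar form. -/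
def IsQuadratic {G M : Type*} [AddCommGroup G] [AddCommGroup M] (q : G → M) : Prop :=
  (∀ a, q (-a) = q a) ∧
  IsBiadd (fun a b => q (a + b) - q a - q b)

/-- A 2-abelian 3-cocycle: a 3-cocycle `h` together with `c` satisfying the
hexagon compatibility conditions. -/
def IsAb3Cocycle {G M : Type*} [AddCommGroup G] [AddCommGroup M]
    (h : G → G → G → M) (c : G → G → M) : Prop :=
  (∀ a b d e, h a b d + h a (b + d) e + h b d e = h (a + b) d e + h a b (d + e)) ∧
  (∀ x y z, h y z x + c x (y + z) + h x y z = c x z + h y x z + c x y) ∧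
  (∀ x y z, -h z x y + c (x + y) z - h x y z = c x z - h x z y + c y z)
/-- The group of quadratic forms `G → M` under pointwise addition. -/
def QuadGroup (G M : Type*) [AddCommGroup G] [AddCommGroup M] : AddSubgroup (G → M) where
  carrier := {q | IsQuadratic q}
  zero_mem' := ⟨fun _ => rfl, by constructor <;> intros <;> simp⟩
  add_mem' := by
    rintro p q ⟨hp1, hp2, hp3⟩ ⟨hq1, hq2, hq3⟩
    refine ⟨fun a => by simp [hp1 a, hq1 a], fun a a' b => ?_, fun a b b' => ?_⟩
    · have h3 := congrArg₂ (· + ·) (hp2 a a' b) (hq2 a a' b)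
      simp only [Pi.add_apply] at h3 ⊢
      rw [← sub_eq_zero] at h3 ⊢
      rw [← h3]
      abel
    · have h3 := congrArg₂ (· + ·) (hp3 a b b') (hq3 a b b')
      simp only [Pi.add_apply] at h3 ⊢
      rw [← sub_eq_zero] at h3 ⊢
      rw [← h3]
      abel
  neg_mem' := by
    rintro p ⟨hp1, hp2, hp3⟩
    refine ⟨fun a => by simp [hp1 a], fun a a' b => ?_, fun a b b' => ?_⟩
    · have h3 := congrArg Neg.neg (hp2 a a' b)
      simp only [Pi.neg_apply] at h3 ⊢
      rw [← sub_eq_zero] at h3 ⊢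
      rw [← h3]
      abel
    · have h3 := congrArg Neg.neg (hp3 a b b')
      simp only [Pi.neg_apply] at h3 ⊢
      rw [← sub_eq_zero] at h3 ⊢
      rw [← h3]
      abel

/-- The `d`-torsion subgroup `M[d] = {m : d • m = 0}`. -/
def torsionBy (M : Type*) [AddCommGroup M] (d : ℕ) : AddSubgroup M where
  carrier := {m | d • m = 0}
  zero_mem' := by simp
  add_mem' := by
    intro a b ha hb
    simp only [Set.mem_setOf_eq, smul_add] at *
    rw [ha, hb, add_zero]
  neg_mem' := by
    intro a ha
    simp only [Set.mem_setOf_eq, smul_neg] at *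
    rw [ha, neg_zero]

/-- The group of biadditive maps `G₁ × G₂ → M` (curried) under pointwise addition. -/
def BilGroup (G₁ G₂ M : Type*) [AddCommGroup G₁] [AddCommGroup G₂] [AddCommGroup M] :
    AddSubgroup (G₁ → G₂ → M) where
  carrier := {f | IsBiadd f}
  zero_mem' := by constructor <;> intros <;> simp
  add_mem' := by
    rintro p q ⟨hp1, hp2⟩ ⟨hq1, hq2⟩
    constructor <;> intros <;> simp only [Pi.add_apply] <;>
      [rw [hp1, hq1]; rw [hp2, hq2]] <;> abel
  neg_mem' := by
    rintro p ⟨hp1, hp2⟩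
    constructor <;> intros <;> simp only [Pi.neg_apply] <;> [rw [hp1]; rw [hp2]] <;> abel

/-!
A quadratic form `q` satisfies `q (k • g) = k ^ 2 • q g`, so on the cyclic group `ZMod n` it is
`q a = a ^ 2 • q 1`. Comparing this at `a = n` and `a = n + 1` with `q 0 = 0` and `q 1` shows
that `q 1` is killed by `n ^ 2` and by `2 * n`. Conversely, if `m` is killed by both, then
`k ↦ k ^ 2 • m` on `ℤ` is constant on the cosets of `nℤ`, since
`(k + n * t) ^ 2 = k ^ 2 + (k * t) * (2 * n) + t ^ 2 * n ^ 2`, and the induced function on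
`ZMod n` is quadratic because `k ↦ k ^ 2 • m` is.
-/

section Quadratic

variable {G H M : Type*} [AddCommGroup G] [AddCommGroup H] [AddCommGroup M]

lemma IsBiadd.zsmul_left {A B : Type*} [AddCommGroup A] [AddCommGroup B] {f : A → B → M}
    (hf : IsBiadd f) (k : ℤ) (a : A) (b : B) : f (k • a) b = k • f a b :=
  (AddMonoidHom.mk' (f · b) fun a a' => hf.1 a a' b).map_zsmul k a

lemma IsBiadd.map_neg_right {A B : Type*} [AddCommGroup A] [AddCommGroup B] {f : A → B → M}
    (hf : IsBiadd f) (a : A) (b : B) : f a (-b) = -f a b :=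
  (AddMonoidHom.mk' (f a) (hf.2 a)).map_neg b

lemma IsBiadd.map_zero_right {A B : Type*} [AddCommGroup A] [AddCommGroup B] {f : A → B → M}
    (hf : IsBiadd f) (a : A) : f a 0 = 0 :=
  (AddMonoidHom.mk' (f a) (hf.2 a)).map_zero

namespace IsQuadratic

variable {q : G → M}

lemma map_zero (hq : IsQuadratic q) : q 0 = 0 := by
  simpa using hq.2.map_zero_right 0

lemma polar_self (hq : IsQuadratic q) (g : G) : q (g + g) - q g - q g = 2 • q g := by
  have h := hq.2.map_neg_right g g
  simp only [add_neg_cancel, hq.map_zero, hq.1] at h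
  rw [two_smul, ← neg_eq_iff_eq_neg.mpr h]
  abel

lemma map_nsmul (hq : IsQuadratic q) (k : ℕ) (g : G) : q (k • g) = k ^ 2 • q g := by
  induction k with
  | zero => simp [hq.map_zero]
  | succ k ih =>
    have hpolar := hq.2.zsmul_left k g g
    simp only [natCast_zsmul, hq.polar_self, ih, sub_sub, sub_eq_iff_eq_add] at hpolar
    rw [succ_nsmul, hpolar]
    module

lemma map_zsmul (hq : IsQuadratic q) (k : ℤ) (g : G) : q (k • g) = k ^ 2 • q g := by
  obtain ⟨k, rfl | rfl⟩ := Int.eq_nat_or_neg k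
  · rw [natCast_zsmul, hq.map_nsmul, ← Nat.cast_pow, natCast_zsmul]
  · rw [neg_smul, natCast_zsmul, hq.1, hq.map_nsmul, neg_sq, ← Nat.cast_pow, natCast_zsmul]

lemma of_comp_surjective (π : H →+ G) (hπ : Function.Surjective π)
    (hq : IsQuadratic (q ∘ π)) : IsQuadratic q := by
  refine ⟨fun a => ?_, fun a a' b => ?_, fun a b b' => ?_⟩
  · obtain ⟨x, rfl⟩ := hπ a
    simpa using hq.1 x
  · obtain ⟨x, rfl⟩ := hπ a
    obtain ⟨x', rfl⟩ := hπ a'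
    obtain ⟨y, rfl⟩ := hπ b
    simpa using hq.2.1 x x' y
  · obtain ⟨x, rfl⟩ := hπ a
    obtain ⟨y, rfl⟩ := hπ b
    obtain ⟨y', rfl⟩ := hπ b'
    simpa using hq.2.2 x y y'

end IsQuadratic

lemma isQuadratic_sq_zsmul (m : M) : IsQuadratic fun k : ℤ => k ^ 2 • m := by
  have hpolar : ∀ k l : ℤ, (k + l) ^ 2 • m - k ^ 2 • m - l ^ 2 • m = (2 * k * l) • m := by
    intro k l
    module
  refine ⟨fun k => by simp, fun k k' l => ?_, fun k l l' => ?_⟩ <;>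
    simp only [hpolar] <;> module

end Quadratic

section Cyclic

variable {M : Type*} [AddCommGroup M] {n : ℕ}

lemma IsQuadratic.eq_cast_sq_smul {q : ZMod n → M} (hq : IsQuadratic q) (a : ZMod n) :
    q a = (a.cast : ℤ) ^ 2 • q 1 := by
  conv_lhs => rw [← ZMod.intCast_zmod_cast a, ← zsmul_one]
  exact hq.map_zsmul _ 1

lemma IsQuadratic.apply_one_mem_torsionBy {q : ZMod n → M} (hq : IsQuadratic q) :
    q 1 ∈ torsionBy M (Nat.gcd (2 * n) (n ^ 2)) := by
  have hsq : (n ^ 2) • q 1 = 0 := by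
    rw [← hq.map_nsmul, nsmul_one, ZMod.natCast_self, hq.map_zero]
  have hsucc : ((n + 1) ^ 2) • q 1 = q 1 := by
    rw [← hq.map_nsmul, nsmul_one, Nat.cast_succ, ZMod.natCast_self, zero_add]
  refine gcd_nsmul_eq_zero.mpr ⟨?_, hsq⟩
  rwa [show (n + 1) ^ 2 = 2 * n + n ^ 2 + 1 by ring, add_smul, add_smul, hsq, one_smul,
    add_zero, add_eq_right] at hsucc

lemma sq_zsmul_eq_of_intCast_eq {m : M} (hm : m ∈ torsionBy M (Nat.gcd (2 * n) (n ^ 2)))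
    {k l : ℤ} (hkl : (k : ZMod n) = l) : k ^ 2 • m = l ^ 2 • m := by
  obtain ⟨h2n, hsq⟩ := gcd_nsmul_eq_zero.mp hm
  obtain ⟨t, ht⟩ := (ZMod.intCast_eq_intCast_iff_dvd_sub k l n).mp hkl
  rw [sub_eq_iff_eq_add'.mp ht,
    show (k + n * t) ^ 2 = k ^ 2 + (k * t) * (2 * n : ℕ) + t ^ 2 * (n ^ 2 : ℕ) by push_cast; ring,
    add_smul, add_smul, mul_smul _ ((2 * n : ℕ) : ℤ), mul_smul _ ((n ^ 2 : ℕ) : ℤ),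
    natCast_zsmul, natCast_zsmul, h2n, hsq, smul_zero, smul_zero, add_zero, add_zero]

def sqForm (n : ℕ) (m : M) : ZMod n → M := fun a => (a.cast : ℤ) ^ 2 • m

lemma sqForm_intCast {m : M} (hm : m ∈ torsionBy M (Nat.gcd (2 * n) (n ^ 2))) (k : ℤ) :
    sqForm n m k = k ^ 2 • m :=
  sq_zsmul_eq_of_intCast_eq hm (ZMod.intCast_zmod_cast _)

lemma isQuadratic_sqForm {m : M} (hm : m ∈ torsionBy M (Nat.gcd (2 * n) (n ^ 2))) :
    IsQuadratic (sqForm n m) := by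
  refine IsQuadratic.of_comp_surjective (Int.castAddHom (ZMod n)) ZMod.intCast_surjective ?_
  convert isQuadratic_sq_zsmul m using 1
  exact funext (sqForm_intCast hm)

def quadEquivTorsionBy (n : ℕ) (M : Type*) [AddCommGroup M] :
    QuadGroup (ZMod n) M ≃+ torsionBy M (Nat.gcd (2 * n) (n ^ 2)) where
  toFun q := ⟨q.1 1, q.2.apply_one_mem_torsionBy⟩
  invFun m := ⟨sqForm n m, isQuadratic_sqForm m.2⟩
  left_inv q := Subtype.ext <| funext fun a => (q.2.eq_cast_sq_smul a).symm
  right_inv m := Subtype.ext <| by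
    simpa using sqForm_intCast m.2 1
  map_add' _ _ := rfl

end Cyclic

theorem stmt4_general (M : Type*) [AddCommGroup M] (n : ℕ) :
    ∃ e : QuadGroup (ZMod n) M ≃+ torsionBy M (Nat.gcd (2 * n) (n ^ 2)),
      ∀ q : QuadGroup (ZMod n) M, (e q : M) = (q : ZMod n → M) 1 :=
  ⟨quadEquivTorsionBy n M, fun _ => rfl⟩

theorem stmt4 (M : Type*) [AddCommGroup M] (n : ℕ) (hn : 0 < n) :
    ∃ e : QuadGroup (ZMod n) M ≃+ torsionBy M (Nat.gcd (2 * n) (n ^ 2)),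
      ∀ q : QuadGroup (ZMod n) M, (e q : M) = (q : ZMod n → M) 1 :=
  stmt4_general M n
end

section
/- If (h,c) is a 2-abelian 3-cocycle on G with coefficients in M, then the symmetrization S(x,y) := c(x,y) + c(y,x) is a bilinear (biadditive) map G × G → M. -/
/-!
The hexagon identity for `(x + y, z)` and the one for `(z, x, y)` contain the same three
values of `h` with opposite signs, so their sum is free of `h` and says exactly that
`S(x, y) = c x y + c y x` is additive in its first argument. Since `S` is symmetric,
additivity in the second argument follows.
-/

namespace IsAb3Cocycle

variable {G M : Type*} [AddCommGroup G] [AddCommGroup M]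
  {h : G → G → G → M} {c : G → G → M}

theorem symm_add_left (hc : IsAb3Cocycle h c) (x y z : G) :
    c (x + y) z + c z (x + y) = (c x z + c z x) + (c y z + c z y) := by
  linear_combination (norm := abel) hc.2.2 x y z + hc.2.1 z x y

theorem symm_add_right (hc : IsAb3Cocycle h c) (x y z : G) :
    c x (y + z) + c (y + z) x = (c x y + c y x) + (c x z + c z x) := by
  rw [add_comm (c x (y + z)), hc.symm_add_left, add_comm (c y x), add_comm (c z x)]

end IsAb3Cocycle

theorem stmt7 {G M : Type*} [AddCommGroup G] [AddCommGroup M]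
    (h : G → G → G → M) (c : G → G → M) (hc : IsAb3Cocycle h c) :
    IsBiadd (fun x y => c x y + c y x) :=
  ⟨hc.symm_add_left, hc.symm_add_right⟩
end

section
/- If (h₁,c₁) and (h₂,c₂) are 2-abelian 3-cocycles on G₁ and G₂ respectively with coefficients in M, and f : G₁ × G₂ → M is biadditive, then (h,c) defined by h((x₁,y₁),(x₂,y₂),(x₃,y₃)) = h₁(x₁,x₂,x₃) + h₂(y₁,y₂,y₃) and c((x₁,y₁),(x₂,y₂)) = c₁(x₁,x₂) + c₂(y₁,y₂) + f(x₁,y₂) is a 2-abelian 3-cocycle on G₁ ⊕ G₂, and its trace satisfies c((x,y),(x,y)) = c₁(x,x) + c₂(y,y) + f(x,y). -/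
/-! The product cocycle is the sum of the pullbacks of `(h₁, c₁)` and `(h₂, c₂)` along the two
projections, twisted by the biadditive form `(p, q) ↦ f p.1 q.2`. Sums and pullbacks of
2-abelian 3-cocycles are again such, and adding a biadditive form to `c` preserves both hexagon
conditions, since it contributes `f x (y + z) = f x z + f x y` to the first and
`f (x + y) z = f x z + f y z` to the second. -/

theorem IsBiadd.comp {A B A' B' M : Type*} [AddCommGroup A] [AddCommGroup B] [AddCommGroup A']
    [AddCommGroup B'] [AddCommGroup M] {f : A → B → M} (hf : IsBiadd f)
    (φ : A' →+ A) (ψ : B' →+ B) : IsBiadd (fun a b => f (φ a) (ψ b)) :=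
  ⟨fun a a' b => by simp only [map_add, hf.1], fun a b b' => by simp only [map_add, hf.2]⟩

namespace IsAb3Cocycle

variable {G M : Type*} [AddCommGroup G] [AddCommGroup M] {h : G → G → G → M} {c : G → G → M}

theorem add {h' : G → G → G → M} {c' : G → G → M} (hc : IsAb3Cocycle h c)
    (hc' : IsAb3Cocycle h' c') :
    IsAb3Cocycle (fun a b d => h a b d + h' a b d) (fun a b => c a b + c' a b) :=
  ⟨fun a b d e => by linear_combination (norm := module) hc.1 a b d e + hc'.1 a b d e,
    fun x y z => by linear_combination (norm := module) hc.2.1 x y z + hc'.2.1 x y z,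
    fun x y z => by linear_combination (norm := module) hc.2.2 x y z + hc'.2.2 x y z⟩

theorem add_biadd {f : G → G → M} (hc : IsAb3Cocycle h c) (hf : IsBiadd f) :
    IsAb3Cocycle h (fun a b => c a b + f a b) :=
  ⟨hc.1,
    fun x y z => by linear_combination (norm := module) hc.2.1 x y z + hf.2 x y z,
    fun x y z => by linear_combination (norm := module) hc.2.2 x y z + hf.1 x y z⟩

theorem comp {H : Type*} [AddCommGroup H] (hc : IsAb3Cocycle h c) (φ : H →+ G) :
    IsAb3Cocycle (fun a b d => h (φ a) (φ b) (φ d)) (fun a b => c (φ a) (φ b)) :=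
  ⟨fun a b d e => by simpa only [map_add] using hc.1 (φ a) (φ b) (φ d) (φ e),
    fun x y z => by simpa only [map_add] using hc.2.1 (φ x) (φ y) (φ z),
    fun x y z => by simpa only [map_add] using hc.2.2 (φ x) (φ y) (φ z)⟩

end IsAb3Cocycle

theorem stmt11 {G₁ G₂ M : Type*} [AddCommGroup G₁] [AddCommGroup G₂] [AddCommGroup M]
    (h₁ : G₁ → G₁ → G₁ → M) (c₁ : G₁ → G₁ → M) (hc₁ : IsAb3Cocycle h₁ c₁)
    (h₂ : G₂ → G₂ → G₂ → M) (c₂ : G₂ → G₂ → M) (hc₂ : IsAb3Cocycle h₂ c₂)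
    (f : G₁ → G₂ → M) (hf : IsBiadd f) :
    IsAb3Cocycle
      (fun p q r : G₁ × G₂ => h₁ p.1 q.1 r.1 + h₂ p.2 q.2 r.2)
      (fun p q : G₁ × G₂ => c₁ p.1 q.1 + c₂ p.2 q.2 + f p.1 q.2) ∧
    ∀ (x : G₁) (y : G₂),
      (fun p q : G₁ × G₂ => c₁ p.1 q.1 + c₂ p.2 q.2 + f p.1 q.2) (x, y) (x, y) =
        c₁ x x + c₂ y y + f x y :=
  ⟨((hc₁.comp (AddMonoidHom.fst G₁ G₂)).add (hc₂.comp (AddMonoidHom.snd G₁ G₂))).add_biadd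
      (hf.comp (AddMonoidHom.fst G₁ G₂) (AddMonoidHom.snd G₁ G₂)),
    fun _ _ => rfl⟩
end

section
/- For n a positive integer and m ∈ M with gcd(2n, n²)·m = 0, the pair (h_{nm}, c_m), where c_m(x,y) = x·y·m for representatives 0 ≤ x,y < n, and h_{nm}(x,y,z) = x·n·m if y+z ≥ n (as integers with 0 ≤ y,z < n) and 0 otherwise, is a 2-abelian 3-cocycle on ℤ/nℤ with coefficients in M. -/
/-!
Let `carry y z ∈ {0, 1}` be the carry in adding representatives, so that
`(y + z).val + n * carry y z = y.val + z.val`; then `h(x,y,z) = (x.val * n * carry y z) • m`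
and `c(x,y) = (x.val * y.val) • m`. Since `carry` is a 2-cocycle, the three identities hold in
any commutative ring up to the error terms `n² * carry a b * carry d e`, `0` and
`2n * z.val * carry x y`. These vanish in `ZMod (gcd (2n, n²))`, through which `k ↦ k • m` factors.
-/

theorem IsAb3Cocycle.map {G M N : Type*} [AddCommGroup G] [AddCommGroup M] [AddCommGroup N]
    {h : G → G → G → M} {c : G → G → M} (hc : IsAb3Cocycle h c) (φ : M →+ N) :
    IsAb3Cocycle (fun x y z => φ (h x y z)) (fun x y => φ (c x y)) := by
  obtain ⟨hcoc, hhex₁, hhex₂⟩ := hc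
  refine ⟨fun a b d e => ?_, fun x y z => ?_, fun x y z => ?_⟩
  · simpa only [map_add] using congrArg φ (hcoc a b d e)
  · simpa only [map_add] using congrArg φ (hhex₁ x y z)
  · simpa only [map_add, map_sub, map_neg] using congrArg φ (hhex₂ x y z)

namespace ZMod

variable {n : ℕ}

def carry (x y : ZMod n) : ℕ := if n ≤ x.val + y.val then 1 else 0

theorem carry_comm (x y : ZMod n) : carry x y = carry y x := by
  rw [carry, carry, Nat.add_comm]

theorem val_add_add_mul_carry [NeZero n] (x y : ZMod n) :
    (x + y).val + n * carry x y = x.val + y.val := by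
  rw [carry]
  split_ifs with h
  · rw [mul_one, val_add_val_of_le h]
  · rw [mul_zero, add_zero, val_add_of_lt (not_le.mp h)]

theorem carry_add_carry_add [NeZero n] (x y z : ZMod n) :
    carry x y + carry (x + y) z = carry y z + carry x (y + z) := by
  have h₁ := val_add_add_mul_carry (x + y) z
  have h₂ := val_add_add_mul_carry x y
  have h₃ := val_add_add_mul_carry x (y + z)
  have h₄ := val_add_add_mul_carry y z
  rw [add_assoc] at h₁
  refine Nat.eq_of_mul_eq_mul_left (Nat.pos_of_ne_zero (NeZero.ne n)) ?_
  linarith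

theorem isAb3Cocycle_carry [NeZero n] {R : Type*} [CommRing R]
    (hsq : (n : R) ^ 2 = 0) (htwo : 2 * (n : R) = 0) :
    IsAb3Cocycle (fun x y z : ZMod n => ((x.val * n * carry y z : ℕ) : R))
      (fun x y : ZMod n => ((x.val * y.val : ℕ) : R)) := by
  have val_add (x y : ZMod n) : ((x + y).val : R) = x.val + y.val - n * carry x y := by
    rw [eq_sub_iff_add_eq]
    exact_mod_cast congrArg (Nat.cast : ℕ → R) (val_add_add_mul_carry x y)
  refine ⟨fun a b d e => ?_, fun x y z => ?_, fun x y z => ?_⟩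
  · have hcoc : (carry b d + carry (b + d) e : R) = carry d e + carry b (d + e) := by
      exact_mod_cast congrArg (Nat.cast : ℕ → R) (carry_add_carry_add b d e)
    push_cast
    rw [val_add a b]
    linear_combination (a.val * n : R) * hcoc + (carry a b * carry d e : R) * hsq
  · have hcomm : (carry z x : R) = carry x z := by rw [carry_comm]
    push_cast
    rw [val_add y z]
    linear_combination (y.val * n : R) * hcomm
  · have hcomm : (carry y z : R) = carry z y := by rw [carry_comm]
    push_cast
    rw [val_add x y]
    linear_combination -(x.val * n : R) * hcomm - (z.val * carry x y : R) * htwo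

end ZMod

theorem stmt12 (M : Type*) [AddCommGroup M] (n : ℕ) [NeZero n] (m : M)
    (hm : Nat.gcd (2 * n) (n ^ 2) • m = 0) :
    IsAb3Cocycle
      (fun x y z : ZMod n => if n ≤ y.val + z.val then (x.val * n) • m else 0)
      (fun x y : ZMod n => (x.val * y.val) • m) := by
  set d := Nat.gcd (2 * n) (n ^ 2)
  have hsq : (n : ZMod d) ^ 2 = 0 := by
    exact_mod_cast (ZMod.natCast_eq_zero_iff _ _).mpr (Nat.gcd_dvd_right _ _)
  have htwo : 2 * (n : ZMod d) = 0 := by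
    exact_mod_cast (ZMod.natCast_eq_zero_iff _ _).mpr (Nat.gcd_dvd_left _ _)
  let φ : ZMod d →+ M := ZMod.lift d ⟨zmultiplesHom M m, by simpa using hm⟩
  have hφ (k : ℕ) : φ k = k • m := by
    rw [← Int.cast_natCast, ZMod.lift_coe]
    simp
  convert (ZMod.isAb3Cocycle_carry hsq htwo).map φ using 1
  · funext x y z
    rw [hφ, ZMod.carry]
    split_ifs <;> simp
  · funext x y
    rw [hφ]
end

section
/- A quadratic form q : ℤ/2^kℤ → M (k ≥ 1) is the trace of a biadditive form (i.e., there exists biadditive c : (ℤ/2^kℤ)² → M with q(x) = c(x,x)) if and only if 2^k · q(1) = 0. -/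
/-!
Polarising `q` gives `q (n • a) = n² • q a`, so on `ZMod n` the form is `q x = x² • q 1`. If
`q x = c x x` with `c` biadditive, then `n • q 1 = c (n • 1) 1 = c 0 1 = 0`. Conversely, if
`n • q 1 = 0`, there is an additive map `φ : ZMod n →+ M` with `φ 1 = q 1`, and `c x y = φ (x * y)`
is biadditive with trace `φ (x²) = x² • q 1 = q x`.
-/

section

variable {A B M : Type*} [AddCommGroup A] [AddCommGroup B] [AddCommGroup M]

theorem IsBiadd.map_nsmul_left {f : A → B → M} (hf : IsBiadd f) (n : ℕ) (a : A) (b : B) :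
    f (n • a) b = n • f a b :=
  (AddMonoidHom.mk' (f · b) fun a a' => hf.1 a a' b).map_nsmul n a

theorem IsBiadd.map_zero_left {f : A → B → M} (hf : IsBiadd f) (b : B) : f 0 b = 0 := by
  simpa using hf.map_nsmul_left 0 0 b

theorem IsQuadratic.map_zero_s14 {q : A → M} (hq : IsQuadratic q) : q 0 = 0 := by
  simpa using hq.2.map_zero_left 0

theorem IsQuadratic.polar_self_s14 {q : A → M} (hq : IsQuadratic q) (a : A) :
    q (a + a) - q a - q a = 2 • q a := by
  have h := hq.2.2 a a (-a)
  simp only [add_neg_cancel, add_zero, hq.map_zero_s14, hq.1] at h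
  rw [two_nsmul]
  linear_combination (norm := abel) -h

theorem IsQuadratic.map_nsmul_s14 {q : A → M} (hq : IsQuadratic q) (n : ℕ) (a : A) :
    q (n • a) = (n * n) • q a := by
  induction n with
  | zero => simpa using hq.map_zero_s14
  | succ n ih =>
    have hpolar : q (n • a + a) - q (n • a) - q a = n • 2 • q a := by
      rw [← hq.polar_self_s14, hq.2.map_nsmul_left]
    calc q ((n + 1) • a) = q (n • a) + q a + n • 2 • q a := by
          rw [succ_nsmul, ← hpolar]; abel
      _ = ((n + 1) * (n + 1)) • q a := by
          rw [ih, smul_smul, ← succ_nsmul, ← add_nsmul]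
          congr 1
          ring

theorem isBiadd_comp_mul {R : Type*} [NonUnitalNonAssocRing R] (φ : R →+ M) :
    IsBiadd fun x y : R => φ (x * y) :=
  ⟨fun a a' b => by simp only [add_mul, map_add], fun a b b' => by simp only [mul_add, map_add]⟩

end

section ZMod

variable {M : Type*} [AddCommGroup M] {n : ℕ}

theorem IsBiadd.nsmul_apply_one_left {B : Type*} [AddCommGroup B] {c : ZMod n → B → M}
    (hc : IsBiadd c) (b : B) : n • c 1 b = 0 := by
  rw [← hc.map_nsmul_left, nsmul_eq_mul, mul_one, ZMod.natCast_self, hc.map_zero_left]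

theorem IsQuadratic.eq_val_mul_val_nsmul [NeZero n] {q : ZMod n → M} (hq : IsQuadratic q)
    (x : ZMod n) : q x = (x.val * x.val) • q 1 := by
  rw [← hq.map_nsmul_s14, nsmul_eq_mul, mul_one, ZMod.natCast_zmod_val]

def ZMod.liftOfNsmulEqZero (m : M) (hm : n • m = 0) : ZMod n →+ M :=
  ZMod.lift n ⟨zmultiplesHom M m, by simpa using hm⟩

theorem ZMod.liftOfNsmulEqZero_natCast (m : M) (hm : n • m = 0) (k : ℕ) :
    ZMod.liftOfNsmulEqZero m hm k = k • m := by
  unfold ZMod.liftOfNsmulEqZero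
  simpa using ZMod.lift_coe n ⟨zmultiplesHom M m, by simpa using hm⟩ (k : ℤ)

theorem IsQuadratic.exists_isBiadd_trace_iff [NeZero n] {q : ZMod n → M} (hq : IsQuadratic q) :
    (∃ c : ZMod n → ZMod n → M, IsBiadd c ∧ ∀ x, q x = c x x) ↔ n • q 1 = 0 := by
  constructor
  · rintro ⟨c, hc, hqc⟩
    rw [hqc]
    exact hc.nsmul_apply_one_left 1
  · intro h
    refine ⟨_, isBiadd_comp_mul (ZMod.liftOfNsmulEqZero (q 1) h), fun x => ?_⟩
    rw [hq.eq_val_mul_val_nsmul, ← ZMod.liftOfNsmulEqZero_natCast (q 1) h, Nat.cast_mul,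
      ZMod.natCast_zmod_val]

end ZMod

theorem stmt14_general (M : Type*) [AddCommGroup M] (k : ℕ)
    (q : ZMod (2 ^ k) → M) (hq : IsQuadratic q) :
    (∃ c : ZMod (2 ^ k) → ZMod (2 ^ k) → M, IsBiadd c ∧ ∀ x, q x = c x x) ↔
      (2 ^ k) • q 1 = 0 :=
  hq.exists_isBiadd_trace_iff

theorem stmt14 (M : Type*) [AddCommGroup M] (k : ℕ) (hk : 1 ≤ k)
    (q : ZMod (2 ^ k) → M) (hq : IsQuadratic q) :
    (∃ c : ZMod (2 ^ k) → ZMod (2 ^ k) → M, IsBiadd c ∧ ∀ x, q x = c x x) ↔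
      (2 ^ k) • q 1 = 0 :=
  stmt14_general M k q hq
end

section
/- Every additive quadratic form q ∈ Hom(G, M[2]) is the trace of a skew-symmetric-type biadditive form: there exists a biadditive c : G × G → M with c(x,x) = q(x) for all x. In particular, for G finitely generated this follows from the criterion |x|·q(x) = 0 for all x in the 2-torsion subgroup of G. -/
/-!
Since `2 • q = 0`, the form `q` factors through its image `N ⊆ M[2]`, an `𝔽₂`-vector space.
In coordinates for a basis of `N`, coordinatewise multiplication is biadditive and, because
`a * a = a` in `𝔽₂`, it maps `(n, n)` to `n`. Pulling it back along `q` gives `c`.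
-/

theorem Module.Free.exists_isBiadd_diag_eq_self {R V : Type*} [CommRing R]
    (hR : ∀ r : R, r * r = r) [AddCommGroup V] [Module R V] [Module.Free R V] :
    ∃ β : V → V → V, IsBiadd β ∧ ∀ v, β v v = v := by
  let b := Module.Free.chooseBasis R V
  refine ⟨fun u v => b.repr.symm (b.repr u * b.repr v), ⟨?_, ?_⟩, fun v => ?_⟩
  · intro u u' v
    simp only [map_add, add_mul]
  · intro u v v'
    simp only [map_add, mul_add]
  · have hidem : b.repr v * b.repr v = b.repr v := by
      ext i
      exact hR _
    simp only [hidem, LinearEquiv.symm_apply_apply]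

theorem AddCommGroup.exists_isBiadd_diag_eq_self_of_two_nsmul {V : Type*} [AddCommGroup V]
    (hV : ∀ v : V, 2 • v = 0) : ∃ β : V → V → V, IsBiadd β ∧ ∀ v, β v v = v :=
  letI := AddCommGroup.zmodModule hV
  Module.Free.exists_isBiadd_diag_eq_self (R := ZMod 2) (by decide)

theorem stmt18 {G M : Type*} [AddCommGroup G] [AddCommGroup M]
    (q : G →+ M) (hq2 : ∀ x, 2 • q x = 0) :
    ∃ c : G → G → M, IsBiadd c ∧ ∀ x, c x x = q x := by
  have hrange : ∀ n : q.range, 2 • n = 0 := by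
    rintro ⟨_, x, rfl⟩
    exact Subtype.ext (hq2 x)
  obtain ⟨β, ⟨hβl, hβr⟩, hβ⟩ := AddCommGroup.exists_isBiadd_diag_eq_self_of_two_nsmul hrange
  refine ⟨fun x y => β (q.rangeRestrict x) (q.rangeRestrict y), ⟨?_, ?_⟩, fun x => ?_⟩
  · intro x x' y
    simp only [map_add, hβl, AddSubgroup.coe_add]
  · intro x y y'
    simp only [map_add, hβr, AddSubgroup.coe_add]
  · simp only [hβ, AddMonoidHom.coe_rangeRestrict]
end
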